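/- arXiv:0711.4689 — 3 statements merged into one kernel-verified Lean document; each statement's English description precedes it below -/
import Mathlib

section
/- Let A and B be groups and let G be a subgroup of the free product A * B. Then the kernel of the restriction to G of the canonical projection q : A * B → A × B is a free group. -/
/-!
Let `A ∗ B` act on `A × B` through `q`. Then `ker q` is the stabilizer of `1`, i.e. a vertex group
of the action groupoid, and this groupoid is connected. It is moreover free on the edges
`(1, y) ⟶ (x, y)` labelled `x ∈ A` and `(x, 1) ⟶ (x, y)` labelled `y ∈ B`: since `A` and `B` act
freely, a functor to a group `X`, i.e. a cocycle `A ∗ B → (A × B → X)`, is on each factor the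
coboundary of the potential given by its values on these edges. Vertex groups of connected free
groupoids are free, and by Nielsen–Schreier so is the kernel of `q ∘ G.subtype`, which embeds
in `ker q`.
-/

open CategoryTheory ActionCategory MulAction

@[simp]
lemma mulAutArrow_apply_apply' {C S X : Type*} [Group C] [MulAction C S] [Monoid X] (g : C)
    (F : S → X) (t : S) : mulAutArrow g F t = F (g⁻¹ • t) := rfl

namespace SemidirectProduct

variable {C S X : Type*} [Group C] [MulAction C S] [Group X]

def coboundaryHom (F : S → X) : C →* (S → X) ⋊[mulAutArrow] C where
  toFun g := ⟨fun t => F t * (F (g⁻¹ • t))⁻¹, g⟩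
  map_one' := by ext <;> simp
  map_mul' g h := by
    ext t
    · simp [-mulAutArrow_apply_apply, mul_smul, mul_assoc]
    · rfl

@[simp]
lemma coboundaryHom_apply_left (F : S → X) (g : C) (t : S) :
    (coboundaryHom F g).left t = F t * (F (g⁻¹ • t))⁻¹ := rfl

@[simp]
lemma coboundaryHom_apply_right (F : S → X) (g : C) : (coboundaryHom F g).right = g := rfl

lemma left_apply_eq_mul_inv {φ : C →* (S → X) ⋊[mulAutArrow] C} (hφ : ∀ g, (φ g).right = g)
    (g h : C) (t : S) :
    (φ g).left t = (φ (g * h)).left t * ((φ h).left (g⁻¹ • t))⁻¹ := by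
  simp [-mulAutArrow_apply_apply, mul_left, hφ]

end SemidirectProduct

namespace CategoryTheory.ActionCategory

variable {C S X : Type*} [Group C] [MulAction C S] [Group X]

lemma curry_apply_left_val (E : ActionCategory C S ⥤ SingleObj X) {a b : ActionCategory C S}
    (m : a ⟶ b) : (curry E m.val).left b.back = E.map m := by
  cases m using ActionCategory.cases
  rfl

lemma eq_uncurry_of_curry_eq {E : ActionCategory C S ⥤ SingleObj X}
    {φ : C →* (S → X) ⋊[mulAutArrow] C} (hφ : ∀ g, (φ g).right = g) (h : curry E = φ) :
    E = uncurry φ hφ := by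
  subst h
  exact Functor.hext (fun _ => rfl) (ActionCategory.cases fun _ _ => heq_of_eq rfl)

end CategoryTheory.ActionCategory

theorem IsFreeGroup.of_injective {G H : Type*} [Group G] [Group H] [IsFreeGroup H] {f : G →* H}
    (hf : Function.Injective f) : IsFreeGroup G :=
  IsFreeGroup.ofMulEquiv (MonoidHom.ofInjective hf).symm

theorem MonoidHom.isFreeGroup_ker_comp {G H K : Type*} [Group G] [Group H] [Group K]
    {f : H →* K} [IsFreeGroup f.ker] {g : G →* H} (hg : Function.Injective g) :
    IsFreeGroup (f.comp g).ker :=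
  IsFreeGroup.of_injective (f := (g.comp (f.comp g).ker.subtype).codRestrict f.ker fun x => x.2)
    fun _ _ h => Subtype.ext <| hg <| congrArg Subtype.val h

namespace Monoid.Coprod

open SemidirectProduct

variable {A B : Type*} [Group A] [Group B]

section ActionOnProd

local instance : MulAction (A ∗ B) (A × B) := MulAction.compHom _ toProd

local instance : IsPretransitive (A ∗ B) (A × B) := isPretransitive_compHom toProd_surjective

@[simp]
lemma inl_smul (a : A) (t : A × B) : (inl a : A ∗ B) • t = (a * t.1, t.2) := by
  ext <;> simp [compHom_smul_def]

@[simp]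
lemma inr_smul (b : B) (t : A × B) : (inr b : A ∗ B) • t = (t.1, b * t.2) := by
  ext <;> simp [compHom_smul_def]

lemma stabilizer_one_eq_ker_toProd : stabilizer (A ∗ B) (1 : A × B) = toProd.ker := by
  ext g
  simp [compHom_smul_def]

section Cocycles

variable {X : Type*} [Group X]

def liftCoboundary (P Q : A × B → X) : A ∗ B →* (A × B → X) ⋊[mulAutArrow] (A ∗ B) :=
  lift ((coboundaryHom P).comp inl) ((coboundaryHom Q).comp inr)

lemma liftCoboundary_apply_right (P Q : A × B → X) (g : A ∗ B) :
    (liftCoboundary P Q g).right = g := by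
  suffices rightHom.comp (liftCoboundary P Q) = .id _ from DFunLike.congr_fun this g
  exact hom_ext rfl rfl

lemma liftCoboundary_inl_apply_left (P Q : A × B → X) (x : A) (y : B) :
    (liftCoboundary P Q (inl x)).left (x, y) = P (x, y) * (P (1, y))⁻¹ := by
  simp [liftCoboundary, ← map_inv]

lemma liftCoboundary_inr_apply_left (P Q : A × B → X) (x : A) (y : B) :
    (liftCoboundary P Q (inr y)).left (x, y) = Q (x, y) * (Q (x, 1))⁻¹ := by
  simp [liftCoboundary, ← map_inv]

lemma eq_liftCoboundary {φ : A ∗ B →* (A × B → X) ⋊[mulAutArrow] (A ∗ B)}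
    (hφ : ∀ g, (φ g).right = g) :
    φ = liftCoboundary (fun p => (φ (inl p.1)).left p) (fun p => (φ (inr p.2)).left p) := by
  refine hom_ext (MonoidHom.ext fun a => ?_) (MonoidHom.ext fun b => ?_) <;>
    refine SemidirectProduct.ext (funext fun t => ?_) (hφ _)
  · rw [MonoidHom.comp_apply, left_apply_eq_mul_inv hφ _ (inl (a⁻¹ * t.1))]
    simp [liftCoboundary, ← map_inv, ← map_mul]
  · rw [MonoidHom.comp_apply, left_apply_eq_mul_inv hφ _ (inr (b⁻¹ * t.2))]
    simp [liftCoboundary, ← map_inv, ← map_mul]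

end Cocycles

local instance : IsFreeGroupoid (ActionCategory (A ∗ B) (A × B)) where
  -- `x ≠ 1` (resp. `y ≠ 1`) excludes the loops labelled by the identity
  quiverGenerators := ⟨fun v w =>
    {p : A × B // p.1 ≠ 1 ∧ v.back = (1, p.2) ∧ w.back = p} ⊕
    {p : A × B // p.2 ≠ 1 ∧ v.back = (p.1, 1) ∧ w.back = p}⟩
  of {v w} e := match e with
    | .inl ⟨p, _, hv, hw⟩ =>
      ⟨inl p.1, show inl p.1 • v.back = w.back by rw [hv, hw, inl_smul]; simp⟩
    | .inr ⟨p, _, hv, hw⟩ =>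
      ⟨inr p.2, show inr p.2 • v.back = w.back by rw [hv, hw, inr_smul]; simp⟩
  unique_lift {X} _ f := by
    classical
    let P : A × B → X := fun p => if h : p.1 = 1 then 1 else
      @f (objEquiv _ _ (1, p.2)) (objEquiv _ _ p) (.inl ⟨p, h, rfl, rfl⟩)
    let Q : A × B → X := fun p => if h : p.2 = 1 then 1 else
      @f (objEquiv _ _ (p.1, 1)) (objEquiv _ _ p) (.inr ⟨p, h, rfl, rfl⟩)
    refine ⟨uncurry (liftCoboundary P Q) (liftCoboundary_apply_right P Q), ?_, fun E hE => ?_⟩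
    · rintro ⟨⟨⟩, v⟩ ⟨⟨⟩, w⟩ (⟨⟨x, y⟩, h, hv, hw⟩ | ⟨⟨x, y⟩, h, hv, hw⟩)
      · obtain rfl : v = (1, y) := hv
        obtain rfl : w = (x, y) := hw
        change (liftCoboundary P Q (inl x)).left (x, y) = _
        simp [liftCoboundary_inl_apply_left, P, h]
        rfl
      · obtain rfl : v = (x, 1) := hv
        obtain rfl : w = (x, y) := hw
        change (liftCoboundary P Q (inr y)).left (x, y) = _
        simp [liftCoboundary_inr_apply_left, Q, h]
        rfl
    · refine eq_uncurry_of_curry_eq _ ?_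
      rw [eq_liftCoboundary (curry_apply_right E)]
      congr 1 <;> funext ⟨x, y⟩
      · by_cases hx : x = 1
        · simp [P, hx]
        · simp only [P, dif_neg hx]
          exact (curry_apply_left_val E _).trans
            (hE (objEquiv _ _ (1, y)) (objEquiv _ _ (x, y)) (.inl ⟨(x, y), hx, rfl, rfl⟩))
      · by_cases hy : y = 1
        · simp [Q, hy]
        · simp only [Q, dif_neg hy]
          exact (curry_apply_left_val E _).trans
            (hE (objEquiv _ _ (x, 1)) (objEquiv _ _ (x, y)) (.inr ⟨(x, y), hy, rfl, rfl⟩))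

theorem isFreeGroup_ker_toProd : IsFreeGroup (toProd : A ∗ B →* A × B).ker :=
  let 𝒢 := ActionCategory (A ∗ B) (A × B)
  let r : 𝒢 := objEquiv _ _ 1
  have : IsFreeGroup (@End 𝒢 Groupoid.toCategory.toCategoryStruct r) :=
    @IsFreeGroupoid.endIsFreeOfConnectedFree _ _ (inferInstanceAs (IsConnected 𝒢)) _ _
  let e : (toProd : A ∗ B →* A × B).ker ≃* stabilizerSubmonoid (A ∗ B) (1 : A × B) :=
    (MulEquiv.subgroupCongr stabilizer_one_eq_ker_toProd).symm
  IsFreeGroup.ofMulEquiv (show @End 𝒢 Groupoid.toCategory.toCategoryStruct r ≃* _ from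
    MulEquiv.symm (e.trans (stabilizerIsoEnd (A ∗ B) (1 : A × B))))

end ActionOnProd

end Monoid.Coprod

/-- If `G` is a subgroup of the free product `A * B`, the kernel of the restriction
to `G` of the canonical projection `q : A * B → A × B` is a free group. -/
theorem kernel_restriction_coprod_to_prod_isFree (A B : Type*) [Group A] [Group B]
    (G : Subgroup (Monoid.Coprod A B)) :
    IsFreeGroup
      (MonoidHom.ker
        ((Monoid.Coprod.lift (MonoidHom.inl A B) (MonoidHom.inr A B)).comp
          G.subtype)) :=
  have := Monoid.Coprod.isFreeGroup_ker_toProd (A := A) (B := B)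
  MonoidHom.isFreeGroup_ker_comp (f := Monoid.Coprod.toProd) G.subtype_injective
end

section
/- Let G_1, …, G_n and H be groups and let f : G_1 * ⋯ * G_n → H be a group homomorphism whose restriction to each free factor G_i is injective. Then the kernel of f is a free group. -/
/-!
The free product `CoprodI G` acts on the cosets of `ker f`, and each factor acts freely because
`f` is injective on it. The action groupoid of such an action is free: for every factor `Gᵢ` choose
a representative in each `Gᵢ`-orbit; the arrows from the representatives to the other points of
their orbits form a basis. A functor to a group is determined by its values on these stars, since
every arrow labelled by `g ∈ Gᵢ` is the difference of two star arrows; conversely, labels on the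
stars define the functor which, on `Gᵢ`, is the action conjugated by the label function. The vertex
group at the trivial coset of this connected free groupoid is `ker f`, which is therefore free.
-/

open CategoryTheory IsFreeGroupoid

namespace Monoid.CoprodI

variable {ι : Type*} (G : ι → Type*) [∀ i, Group (G i)] (A : Type*) [MulAction (CoprodI G) A]

def FactorsActFreely : Prop :=
  ∀ i (g : G i) (a : A), of g • a = a → g = 1

abbrev factorOrbitRel (i : ι) : Setoid A :=
  MulAction.orbitRel (of (M := G) (i := i)).range A

variable {A}

noncomputable def factorRep (i : ι) (a : A) : A :=
  (Quotient.mk (factorOrbitRel G A i) a).out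

variable {G}

theorem exists_of_smul_factorRep (i : ι) (a : A) : ∃ g : G i, of g • factorRep G i a = a := by
  obtain ⟨⟨_, g, rfl⟩, hg⟩ := Quotient.mk_out (s := factorOrbitRel G A i) a
  exact ⟨g⁻¹, by rw [factorRep, ← hg, map_inv]; exact inv_smul_smul _ a⟩

theorem factorRep_of_smul {i : ι} (g : G i) (a : A) :
    factorRep G i (of g • a) = factorRep G i a := by
  unfold factorRep
  congr 1
  exact Quotient.sound ⟨⟨of g, g, rfl⟩, rfl⟩

variable (G) in
noncomputable def factorOffset (i : ι) (a : A) : G i :=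
  (exists_of_smul_factorRep i a).choose

theorem of_factorOffset_smul_factorRep (i : ι) (a : A) :
    of (factorOffset G i a) • factorRep G i a = a :=
  (exists_of_smul_factorRep i a).choose_spec

theorem factorRep_factorRep (i : ι) (a : A) :
    factorRep G i (factorRep G i a) = factorRep G i a := by
  conv_rhs => rw [← of_factorOffset_smul_factorRep (G := G) i a, factorRep_of_smul]

theorem FactorsActFreely.eq_of_of_smul_eq (hfree : FactorsActFreely G A) {i : ι} {g g' : G i}
    {a : A} (h : of g • a = of g' • a) : g = g' := by
  have : of (g'⁻¹ * g) • a = a := by rw [map_mul, map_inv, mul_smul, h, inv_smul_smul]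
  exact (inv_mul_eq_one.mp (hfree i _ a this)).symm

theorem FactorsActFreely.eq_factorOffset (hfree : FactorsActFreely G A) {i : ι} {g : G i} {a : A}
    (h : of g • factorRep G i a = a) : g = factorOffset G i a :=
  hfree.eq_of_of_smul_eq (by rw [h, of_factorOffset_smul_factorRep])

theorem FactorsActFreely.factorOffset_factorRep (hfree : FactorsActFreely G A) (i : ι) (a : A) :
    factorOffset G i (factorRep G i a) = 1 :=
  (hfree.eq_factorOffset (by rw [factorRep_factorRep, map_one, one_smul])).symm

variable (G A) in
abbrev factorStarQuiver : Quiver (Generators (ActionCategory (CoprodI G) A)) where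
  Hom a b := { p : Σ i, G i //
    of p.2 • a.back = b.back ∧ p.2 ≠ 1 ∧ a.back = factorRep G p.1 b.back }

attribute [local instance] factorStarQuiver

def factorStarQuiver.toHom {a b : Generators (ActionCategory (CoprodI G) A)} (e : a ⟶ b) :
    (show ActionCategory (CoprodI G) A from a) ⟶ b :=
  ⟨of e.1.2, e.2.1⟩

variable (G) in
abbrev actionObj (x : A) : ActionCategory (CoprodI G) A := ActionCategory.objEquiv _ _ x

variable (G) in
abbrev generatorObj (x : A) : Generators (ActionCategory (CoprodI G) A) := actionObj G x

variable (G) in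
noncomputable def factorRepHom (i : ι) (a : A) :
    actionObj G (factorRep G i a) ⟶ actionObj G a :=
  ⟨of (factorOffset G i a), of_factorOffset_smul_factorRep i a⟩

theorem _root_.CategoryTheory.ActionCategory.map_congr {M A X : Type*} [Group M] [MulAction M A]
    [Group X] (E : ActionCategory M A ⥤ SingleObj X) {a a' b : ActionCategory M A} (h : a = a')
    (f : a ⟶ b) (f' : a' ⟶ b) (hv : f.val = f'.val) : E.map f = E.map f' := by
  subst h
  rw [Subtype.ext hv]

section Lift

variable {X : Type*} [Group X] (ℓ : Quiver.Labelling (Generators (ActionCategory (CoprodI G) A)) X)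

noncomputable def factorStarArrow (i : ι) (a : A) (h : factorOffset G i a ≠ 1) :
    generatorObj G (factorRep G i a) ⟶ generatorObj G a :=
  ⟨⟨i, factorOffset G i a⟩, of_factorOffset_smul_factorRep i a, h, rfl⟩

open scoped Classical in
noncomputable def factorStarLabel (i : ι) (a : A) : X :=
  if h : factorOffset G i a = 1 then 1 else ℓ (factorStarArrow i a h)

theorem FactorsActFreely.factorStarLabel_factorRep (hfree : FactorsActFreely G A) (i : ι)
    (a : A) : factorStarLabel ℓ i (factorRep G i a) = 1 :=
  dif_pos (hfree.factorOffset_factorRep i a)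

noncomputable def factorStarLift (i : ι) : G i →* (A → X) ⋊[mulAutArrow] CoprodI G :=
  (MulAut.conj (SemidirectProduct.inl (factorStarLabel ℓ i))).toMonoidHom.comp
    (SemidirectProduct.inr.comp of)

theorem factorStarLift_apply (i : ι) (g : G i) :
    factorStarLift ℓ i g =
      ⟨fun b => factorStarLabel ℓ i b * (factorStarLabel ℓ i ((of g)⁻¹ • b))⁻¹, of g⟩ := by
  ext b
  · simp only [factorStarLift, MulEquiv.toMonoidHom_eq_coe, MonoidHom.coe_comp, MonoidHom.coe_coe,
      Function.comp_apply, MulAut.conj_apply, SemidirectProduct.mul_left, SemidirectProduct.left_inl,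
      SemidirectProduct.right_inl, map_one, SemidirectProduct.left_inr, mul_one,
      SemidirectProduct.inv_left, map_inv, Pi.mul_apply, Pi.inv_apply, mulAutArrow_apply_apply,
      mul_right_inj, inv_inj]
    rfl
  · simp [factorStarLift]

theorem lift_factorStarLift_right (w : CoprodI G) : (lift (factorStarLift ℓ) w).right = w := by
  suffices SemidirectProduct.rightHom.comp (lift (factorStarLift ℓ)) = MonoidHom.id _ from
    DFunLike.ext_iff.mp this w
  refine ext_hom _ _ fun i => ?_
  ext g
  simp [factorStarLift_apply]

theorem FactorsActFreely.lift_factorStarLift_toHom (hfree : FactorsActFreely G A)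
    {a b : Generators (ActionCategory (CoprodI G) A)} (e : a ⟶ b) :
    (lift (factorStarLift ℓ) (factorStarQuiver.toHom e).val).left b.back = ℓ e := by
  obtain ⟨⟨⟩, x : A⟩ := a
  obtain ⟨⟨⟩, y : A⟩ := b
  obtain ⟨⟨i, g⟩, hsmul : of g • x = y, hne : g ≠ 1, hrep : x = factorRep G i y⟩ := e
  subst hrep
  have hg : g = factorOffset G i y := hfree.eq_factorOffset hsmul
  subst hg
  change (lift (factorStarLift ℓ) (of (factorOffset G i y))).left y = _
  rw [lift_of, factorStarLift_apply]
  change factorStarLabel ℓ i y * (factorStarLabel ℓ i ((of (factorOffset G i y))⁻¹ • y))⁻¹ = _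
  rw [inv_smul_eq_iff.mpr hsmul.symm,
    hfree.factorStarLabel_factorRep, inv_one, mul_one, factorStarLabel, dif_neg hne]
  rfl

variable {ℓ} in
theorem map_factorRepHom {E : ActionCategory (CoprodI G) A ⥤ SingleObj X}
    (hE : ∀ a b (e : a ⟶ b), E.map (factorStarQuiver.toHom e) = ℓ e) (i : ι) (a : A) :
    E.map (factorRepHom G i a) = factorStarLabel ℓ i a := by
  by_cases h : factorOffset G i a = 1
  · have hrep : factorRep G i a = a := by
      simpa [h] using of_factorOffset_smul_factorRep (G := G) i a
    rw [factorStarLabel, dif_pos h,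
      ActionCategory.map_congr E (congrArg (actionObj G) hrep) _ (𝟙 _)
        (show of (factorOffset G i a) = 1 by rw [h, map_one])]
    exact E.map_id _
  · rw [factorStarLabel, dif_neg h]
    exact hE _ _ (factorStarArrow i a h)

variable {ℓ} in
theorem FactorsActFreely.map_homOfPair_of (hfree : FactorsActFreely G A)
    {E : ActionCategory (CoprodI G) A ⥤ SingleObj X}
    (hE : ∀ a b (e : a ⟶ b), E.map (factorStarQuiver.toHom e) = ℓ e) {i : ι} (g : G i) (b : A) :
    E.map (ActionCategory.homOfPair b (of g)) =
      factorStarLabel ℓ i b * (factorStarLabel ℓ i ((of g)⁻¹ • b))⁻¹ := by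
  have hrep : factorRep G i ((of g)⁻¹ • b) = factorRep G i b := by
    rw [← map_inv, factorRep_of_smul]
  have hoffset : of (g * factorOffset G i ((of g)⁻¹ • b)) = of (factorOffset G i b) := by
    refine congrArg of (hfree.eq_factorOffset ?_)
    rw [map_mul, mul_smul, ← hrep, of_factorOffset_smul_factorRep, smul_inv_smul]
  have hcomp : E.map (factorRepHom G i ((of g)⁻¹ • b) ≫
      (show actionObj G _ ⟶ actionObj G b from ActionCategory.homOfPair b (of g))) =
      E.map (factorRepHom G i b) :=
    ActionCategory.map_congr E (congrArg (actionObj G) hrep) _ _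
      ((map_mul of _ _).symm.trans hoffset)
  rw [Functor.map_comp, SingleObj.comp_as_mul, map_factorRepHom hE, map_factorRepHom hE] at hcomp
  exact eq_mul_inv_of_mul_eq hcomp

end Lift

noncomputable abbrev FactorsActFreely.isFreeGroupoid (hfree : FactorsActFreely G A) :
    IsFreeGroupoid (ActionCategory (CoprodI G) A) where
  quiverGenerators := factorStarQuiver G A
  of := factorStarQuiver.toHom
  unique_lift ℓ := by
    refine ⟨ActionCategory.uncurry _ (lift_factorStarLift_right ℓ),
      fun a b e => hfree.lift_factorStarLift_toHom ℓ e, fun E hE => ?_⟩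
    have hcurry : ActionCategory.curry E = lift (factorStarLift ℓ) := by
      refine ext_hom _ _ fun i => ?_
      ext g b
      · change E.map (ActionCategory.homOfPair b (of g)) = _
        rw [MonoidHom.comp_apply, lift_of, factorStarLift_apply]
        exact hfree.map_homOfPair_of hE g b
      · rfl
    refine Functor.hext (fun _ => Unit.ext _ _) (ActionCategory.cases fun t g => heq_of_eq ?_)
    change _ = (lift (factorStarLift ℓ) g).left t
    rw [← hcurry]
    rfl

theorem isFreeGroup_of_conj_mem_eq_one (K : Subgroup (CoprodI G))
    (hK : ∀ i (g : G i) (x : CoprodI G), x⁻¹ * of g * x ∈ K → g = 1) : IsFreeGroup K := by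
  have hfree : FactorsActFreely G (CoprodI G ⧸ K) := by
    intro i g a h
    induction a using QuotientGroup.induction_on with | H x => ?_
    refine inv_eq_one.mp (hK i g⁻¹ x ?_)
    simpa [mul_assoc] using QuotientGroup.eq.mp h
  let := hfree.isFreeGroupoid
  -- the `IsConnected` instance is stated for the category, not the groupoid, structure
  exact @IsFreeGroup.ofMulEquiv _ _ (@IsFreeGroupoid.endIsFreeOfConnectedFree _ _
    ActionCategory.instIsConnectedOfIsPretransitiveOfNonempty _ _) _ _
    (ActionCategory.endMulEquivSubgroup K)

end Monoid.CoprodI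

/-- If `f : G₁ * ⋯ * Gₙ → H` is a homomorphism from a free product which is injective
on each free factor `Gᵢ`, then the kernel of `f` is a free group. -/
theorem kernel_isFree_of_injective_on_factors (n : ℕ) (G : Fin n → Type*)
    [∀ i, Group (G i)] (H : Type*) [Group H] (f : Monoid.CoprodI G →* H)
    (hf : ∀ i : Fin n, Function.Injective (f.comp (Monoid.CoprodI.of (i := i)))) :
    IsFreeGroup (MonoidHom.ker f) := by
  refine Monoid.CoprodI.isFreeGroup_of_conj_mem_eq_one _ fun i g x hx => hf i ?_
  simpa [mul_assoc, inv_mul_eq_one] using hx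
end

section
/- Let π and Γ be nontrivial groups. The kernel of the canonical projection q : π * Γ → π × Γ is a free group whose rank (when π and Γ are finite) equals (|π| − 1)(|Γ| − 1); it is freely generated by the commutators [a,b] = a b a^{-1} b^{-1} for a ∈ π \ {1}, b ∈ Γ \ {1}. -/
/-!
Let `φ` send the free generator `(a, b)` to `⁅inl a, inr b⁆`. The coproduct acts on
`π × Γ × FreeGroup _` so that `(p, g, w) ↦ inl p * inr g * φ w` is equivariant and the orbit map
of `(1, 1, 1)` inverts it. Hence every element of `π ∗ Γ` is uniquely `inl p * inr g * φ w`; its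
image in `π × Γ` is `(p, g)`, so the kernel is exactly the image of the injective map `φ`.
-/

open scoped commutatorElement

lemma Nat.card_subtype_ne {α : Type*} (x : α) : Nat.card {a // a ≠ x} = Nat.card α - 1 := by
  change Nat.card ({x}ᶜ : Set α) = _
  rw [Nat.card_coe_set_eq, Set.compl_eq_univ_sdiff,
    Set.ncard_sdiff_singleton_of_mem (Set.mem_univ x), Set.ncard_univ]

namespace Monoid.Coprod

variable {π Γ : Type*} [Group π] [Group Γ]

variable (π Γ) in
abbrev CommutatorIndex := {a : π // a ≠ 1} × {b : Γ // b ≠ 1}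

open Classical in
noncomputable def freeCommutator (a : π) (b : Γ) : FreeGroup (CommutatorIndex π Γ) :=
  if h : a ≠ 1 ∧ b ≠ 1 then .of (⟨a, h.1⟩, ⟨b, h.2⟩) else 1

@[simp] lemma freeCommutator_one_left (b : Γ) : freeCommutator (1 : π) b = 1 := by
  simp [freeCommutator]

@[simp] lemma freeCommutator_one_right (a : π) : freeCommutator a (1 : Γ) = 1 := by
  simp [freeCommutator]

lemma freeCommutator_of_ne_one (a : {a : π // a ≠ 1}) (b : {b : Γ // b ≠ 1}) :
    freeCommutator a.1 b.1 = .of (a, b) := by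
  simp [freeCommutator, a.2, b.2]

noncomputable def commutatorLift : FreeGroup (CommutatorIndex π Γ) →* π ∗ Γ :=
  FreeGroup.lift fun i => ⁅(inl i.1.1 : π ∗ Γ), inr i.2.1⁆

@[simp] lemma commutatorLift_of (i : CommutatorIndex π Γ) :
    commutatorLift (.of i) = ⁅(inl i.1.1 : π ∗ Γ), inr i.2.1⁆ :=
  FreeGroup.lift_apply_of

@[simp] lemma commutatorLift_freeCommutator (a : π) (b : Γ) :
    commutatorLift (freeCommutator a b) = ⁅(inl a : π ∗ Γ), inr b⁆ := by
  by_cases h : a ≠ 1 ∧ b ≠ 1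
  · simp [freeCommutator, h]
  · obtain rfl | rfl : a = 1 ∨ b = 1 := by tauto
    all_goals simp

lemma toProd_comp_commutatorLift :
    toProd.comp (commutatorLift : FreeGroup (CommutatorIndex π Γ) →* π ∗ Γ) = 1 :=
  FreeGroup.ext_hom _ _ fun i => by simp [commutatorElement_def]

noncomputable def ofNormalForm (x : π × Γ × FreeGroup (CommutatorIndex π Γ)) : π ∗ Γ :=
  inl x.1 * inr x.2.1 * commutatorLift x.2.2

lemma toProd_ofNormalForm (x : π × Γ × FreeGroup (CommutatorIndex π Γ)) :
    toProd (ofNormalForm x) = (x.1, x.2.1) := by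
  simp [ofNormalForm, ← MonoidHom.comp_apply, toProd_comp_commutatorLift]

variable (π Γ) in
noncomputable def inlAction : π →* Function.End (π × Γ × FreeGroup (CommutatorIndex π Γ)) where
  toFun a x := (a * x.1, x.2)
  map_one' := by funext x; simp [Function.End.one_def]
  map_mul' a a' := funext fun x => congrArg (·, x.2) (mul_assoc a a' x.1)

variable (π Γ) in
/-- Since `⁅inl p⁻¹, inr g⁻¹⁆ = (inr g * inl p)⁻¹ * (inl p * inr g)`, the third component is
what moves `inr b * (inl p * inr g)` into the form `inl p * inr (b * g) * _`. -/
noncomputable def inrAction : Γ →* Function.End (π × Γ × FreeGroup (CommutatorIndex π Γ)) where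
  toFun b x := (x.1, b * x.2.1,
    (freeCommutator x.1⁻¹ (b * x.2.1)⁻¹)⁻¹ * freeCommutator x.1⁻¹ x.2.1⁻¹ * x.2.2)
  map_one' := by funext x; simp [Function.End.one_def]
  map_mul' b b' := funext fun x => by
    change _ = (x.1, b * (b' * x.2.1), _ * (_ * _ * x.2.2))
    simp [mul_assoc]

noncomputable def normalFormAction :
    π ∗ Γ →* Function.End (π × Γ × FreeGroup (CommutatorIndex π Γ)) :=
  lift (inlAction π Γ) (inrAction π Γ)

lemma normalFormAction_inl (a : π) (x : π × Γ × FreeGroup (CommutatorIndex π Γ)) :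
    normalFormAction (inl a) x = (a * x.1, x.2) := rfl

lemma normalFormAction_inr (b : Γ) (x : π × Γ × FreeGroup (CommutatorIndex π Γ)) :
    normalFormAction (inr b) x =
      (x.1, b * x.2.1,
        (freeCommutator x.1⁻¹ (b * x.2.1)⁻¹)⁻¹ * freeCommutator x.1⁻¹ x.2.1⁻¹ * x.2.2) := rfl

lemma normalFormAction_mul (z z' : π ∗ Γ) (x : π × Γ × FreeGroup (CommutatorIndex π Γ)) :
    normalFormAction (z * z') x = normalFormAction z (normalFormAction z' x) := by
  rw [map_mul]; rfl

lemma ofNormalForm_normalFormAction (z : π ∗ Γ) (x : π × Γ × FreeGroup (CommutatorIndex π Γ)) :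
    ofNormalForm (normalFormAction z x) = z * ofNormalForm x := by
  induction z using induction_on generalizing x with
  | inl a => simp [normalFormAction_inl, ofNormalForm, mul_assoc]
  | inr b =>
    simp only [normalFormAction_inr, ofNormalForm, map_mul, map_inv, commutatorLift_freeCommutator,
      commutatorElement_def]
    group
  | mul z z' hz hz' => rw [normalFormAction_mul, hz, hz', mul_assoc]

lemma normalFormAction_inr_of_fst_eq_one (b : Γ) (g : Γ) (w : FreeGroup (CommutatorIndex π Γ)) :
    normalFormAction (inr b) (1, g, w) = (1, b * g, w) := by
  simp [normalFormAction_inr]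

lemma normalFormAction_commutatorLift_of (i : CommutatorIndex π Γ)
    (v : FreeGroup (CommutatorIndex π Γ)) :
    normalFormAction (commutatorLift (.of i)) (1, 1, v) = (1, 1, .of i * v) := by
  obtain ⟨a, b⟩ := i
  rw [commutatorLift_of, commutatorElement_def, ← map_inv, ← map_inv, normalFormAction_mul,
    normalFormAction_mul, normalFormAction_mul, normalFormAction_inr_of_fst_eq_one,
    normalFormAction_inl, normalFormAction_inr, normalFormAction_inl]
  simp [freeCommutator_of_ne_one]

lemma normalFormAction_commutatorLift (w v : FreeGroup (CommutatorIndex π Γ)) :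
    normalFormAction (commutatorLift w) (1, 1, v) = (1, 1, w * v) := by
  induction w using FreeGroup.induction_on generalizing v with
  | C1 => rw [map_one, map_one, one_mul]; rfl
  | of i => exact normalFormAction_commutatorLift_of i v
  | inv_of i _ =>
    conv_lhs => rw [← mul_inv_cancel_left (FreeGroup.of i) v]
    rw [← normalFormAction_commutatorLift_of, ← normalFormAction_mul, ← map_mul, inv_mul_cancel,
      map_one]
    rfl
  | mul w w' hw hw' => rw [map_mul, normalFormAction_mul, hw', hw, mul_assoc]

lemma normalFormAction_ofNormalForm (x : π × Γ × FreeGroup (CommutatorIndex π Γ)) :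
    normalFormAction (ofNormalForm x) 1 = x := by
  obtain ⟨a, b, w⟩ := x
  rw [ofNormalForm, normalFormAction_mul, normalFormAction_mul, Prod.one_eq_mk, Prod.one_eq_mk,
    normalFormAction_commutatorLift, normalFormAction_inr_of_fst_eq_one, normalFormAction_inl]
  simp

variable (π Γ) in
noncomputable def normalFormEquiv : π × Γ × FreeGroup (CommutatorIndex π Γ) ≃ π ∗ Γ where
  toFun := ofNormalForm
  invFun z := normalFormAction z 1
  left_inv := normalFormAction_ofNormalForm
  right_inv z := by
    change ofNormalForm (normalFormAction z 1) = z
    rw [ofNormalForm_normalFormAction]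
    simp [ofNormalForm]

lemma commutatorLift_eq_ofNormalForm (w : FreeGroup (CommutatorIndex π Γ)) :
    commutatorLift w = ofNormalForm ((1, 1, w) : π × Γ × _) := by
  simp [ofNormalForm]

lemma commutatorLift_injective :
    Function.Injective (commutatorLift : FreeGroup (CommutatorIndex π Γ) →* π ∗ Γ) := by
  intro w w' h
  rw [commutatorLift_eq_ofNormalForm, commutatorLift_eq_ofNormalForm] at h
  simpa using (normalFormEquiv π Γ).injective h

lemma range_commutatorLift :
    (commutatorLift : FreeGroup (CommutatorIndex π Γ) →* π ∗ Γ).range = toProd.ker := by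
  refine le_antisymm ?_ fun z hz => ?_
  · rintro _ ⟨w, rfl⟩
    exact DFunLike.congr_fun toProd_comp_commutatorLift w
  · obtain ⟨⟨a, b, w⟩, rfl⟩ := (normalFormEquiv π Γ).surjective z
    obtain ⟨rfl, rfl⟩ : a = 1 ∧ b = 1 := by
      simpa [normalFormEquiv, toProd_ofNormalForm] using hz
    exact ⟨w, commutatorLift_eq_ofNormalForm w⟩

variable (π Γ) in
noncomputable def commutatorLiftEquivKer :
    FreeGroup (CommutatorIndex π Γ) ≃* (toProd : π ∗ Γ →* π × Γ).ker :=
  (MonoidHom.ofInjective commutatorLift_injective).trans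
    (MulEquiv.subgroupCongr range_commutatorLift)

end Monoid.Coprod

open Monoid.Coprod in
theorem kernel_coprod_to_prod_basis_general (π Γ : Type*) [Group π] [Group Γ] :
    (∃ B : FreeGroupBasis ({a : π // a ≠ 1} × {b : Γ // b ≠ 1})
        (MonoidHom.ker (Monoid.Coprod.lift (MonoidHom.inl π Γ) (MonoidHom.inr π Γ))),
      ∀ (a : {a : π // a ≠ 1}) (b : {b : Γ // b ≠ 1}),
        ((B (a, b) : MonoidHom.ker
            (Monoid.Coprod.lift (MonoidHom.inl π Γ) (MonoidHom.inr π Γ))) :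
          Monoid.Coprod π Γ) =
          ⁅(Monoid.Coprod.inl a.1 : Monoid.Coprod π Γ), (Monoid.Coprod.inr b.1 : Monoid.Coprod π Γ)⁆) ∧
    Nat.card ({a : π // a ≠ 1} × {b : Γ // b ≠ 1}) =
      (Nat.card π - 1) * (Nat.card Γ - 1) := by
  refine ⟨⟨(FreeGroupBasis.ofFreeGroup _).map (commutatorLiftEquivKer π Γ), fun a b => ?_⟩, ?_⟩
  · exact commutatorLift_of (a, b)
  · rw [Nat.card_prod, Nat.card_subtype_ne, Nat.card_subtype_ne]

/-- For nontrivial groups `π` and `Γ`, the kernel of the canonical projection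
`q : π * Γ → π × Γ` is a free group, freely generated by the commutators
`[a,b] = a b a⁻¹ b⁻¹` for `a ∈ π \ {1}`, `b ∈ Γ \ {1}`; in particular its rank
(for finite `π`, `Γ`) is `(|π| - 1)(|Γ| - 1)`. -/
theorem kernel_coprod_to_prod_basis (π Γ : Type*) [Group π] [Group Γ]
    [Nontrivial π] [Nontrivial Γ] :
    (∃ B : FreeGroupBasis ({a : π // a ≠ 1} × {b : Γ // b ≠ 1})
        (MonoidHom.ker (Monoid.Coprod.lift (MonoidHom.inl π Γ) (MonoidHom.inr π Γ))),
      ∀ (a : {a : π // a ≠ 1}) (b : {b : Γ // b ≠ 1}),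
        ((B (a, b) : MonoidHom.ker
            (Monoid.Coprod.lift (MonoidHom.inl π Γ) (MonoidHom.inr π Γ))) :
          Monoid.Coprod π Γ) =
          ⁅(Monoid.Coprod.inl a.1 : Monoid.Coprod π Γ), (Monoid.Coprod.inr b.1 : Monoid.Coprod π Γ)⁆) ∧
    Nat.card ({a : π // a ≠ 1} × {b : Γ // b ≠ 1}) =
      (Nat.card π - 1) * (Nat.card Γ - 1) :=
  kernel_coprod_to_prod_basis_general π Γ
end
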